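/- arXiv:0902.0066 — 2 statements merged into one kernel-verified Lean document; each statement's English description precedes it below -/
import Mathlib

section
/- Let w be smooth on ℝ² × [0,H], L-periodic in x and y, with w = 0 at z = 0 and z = H. Then ‖w_z‖₃ ≤ 2^{1/2} ‖w_{zz}‖₂^{1/2} ‖w‖₆^{1/2}. -/
open MeasureTheory Real

noncomputable section

/-- Partial derivative in the first (x) variable. -/
def pX (f : ℝ → ℝ → ℝ → ℝ) : ℝ → ℝ → ℝ → ℝ := fun x y z => deriv (fun s => f s y z) x
/-- Partial derivative in the second (y) variable. -/
def pY (f : ℝ → ℝ → ℝ → ℝ) : ℝ → ℝ → ℝ → ℝ := fun x y z => deriv (fun s => f x s z) y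
/-- Partial derivative in the third (z) variable. -/
def pZ (f : ℝ → ℝ → ℝ → ℝ) : ℝ → ℝ → ℝ → ℝ := fun x y z => deriv (fun s => f x y s) z

/-- The cylinder Ω = [0,L] × [0,L] × [0,H]. -/
def Omega (L H : ℝ) : Set (ℝ × ℝ × ℝ) := Set.Icc 0 L ×ˢ Set.Icc 0 L ×ˢ Set.Icc 0 H

/-- Smoothness (C^∞) of a scalar field on ℝ³. -/
def Smooth3 (f : ℝ → ℝ → ℝ → ℝ) : Prop := ContDiff ℝ (⊤ : ℕ∞) (fun p : ℝ × ℝ × ℝ => f p.1 p.2.1 p.2.2)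

/-- L-periodicity in the horizontal variables x and y. -/
def PerXY (L : ℝ) (f : ℝ → ℝ → ℝ → ℝ) : Prop :=
  ∀ x y z : ℝ, f (x + L) y z = f x y z ∧ f x (y + L) z = f x y z

/-- First component of the curl of the vector field (f, g, h). -/
def curl1 (f g h : ℝ → ℝ → ℝ → ℝ) : ℝ → ℝ → ℝ → ℝ := fun x y z => pY h x y z - pZ g x y z
/-- Second component of the curl of the vector field (f, g, h). -/
def curl2 (f g h : ℝ → ℝ → ℝ → ℝ) : ℝ → ℝ → ℝ → ℝ := fun x y z => pZ f x y z - pX h x y z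
/-- Third component of the curl of the vector field (f, g, h). -/
def curl3 (f g h : ℝ → ℝ → ℝ → ℝ) : ℝ → ℝ → ℝ → ℝ := fun x y z => pX g x y z - pY f x y z

/-- ω₃ = v_x − u_y. -/
def om (u v : ℝ → ℝ → ℝ → ℝ) : ℝ → ℝ → ℝ → ℝ := fun x y z => pX v x y z - pY u x y z

section Helpers

open intervalIntegral ContDiff

lemma hasDerivAt_absMul (t : ℝ) : HasDerivAt (fun s : ℝ => |s| * s) (2 * |t|) t := by
  rcases lt_trichotomy t 0 with ht | rfl | ht
  · have he : (fun s : ℝ => |s| * s) =ᶠ[nhds t] (fun s => -(s * s)) := by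
      filter_upwards [eventually_lt_nhds ht] with s hs
      rw [abs_of_neg hs]; ring
    have h : HasDerivAt (fun s : ℝ => -(s * s)) (2 * |t|) t := by
      have := ((hasDerivAt_id t).mul (hasDerivAt_id t)).neg
      exact this.congr_deriv (by rw [abs_of_neg ht]; simp only [id]; ring)
    exact h.congr_of_eventuallyEq he
  · rw [hasDerivAt_iff_tendsto_slope]
    have hs : ∀ s : ℝ, s ≠ 0 → slope (fun s : ℝ => |s| * s) 0 s = |s| := by
      intro s hs
      rw [slope_def_field]; simp [hs]
    have : Filter.Tendsto (fun s : ℝ => |s|) (nhdsWithin 0 {(0:ℝ)}ᶜ) (nhds (2 * |(0:ℝ)|)) := by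
      simp only [abs_zero, mul_zero]
      have := (continuous_abs.tendsto 0).mono_left (nhdsWithin_le_nhds (s := {(0:ℝ)}ᶜ))
      simpa using this
    refine this.congr' ?_
    filter_upwards [self_mem_nhdsWithin] with s hsm
    exact (hs s hsm).symm
  · have he : (fun s : ℝ => |s| * s) =ᶠ[nhds t] (fun s => s * s) := by
      filter_upwards [eventually_gt_nhds ht] with s hs
      rw [abs_of_pos hs]
    have h : HasDerivAt (fun s : ℝ => s * s) (2 * |t|) t := by
      have := (hasDerivAt_id t).mul (hasDerivAt_id t)
      exact this.congr_deriv (by rw [abs_of_pos ht]; simp only [id]; ring)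
    exact h.congr_of_eventuallyEq he

lemma oneD (H : ℝ) (hH : 0 ≤ H) (g : ℝ → ℝ) (hgo : ContDiff ℝ (⊤ : ℕ∞) g)
    (h0 : g 0 = 0) (hHv : g H = 0) :
    ∫ z in (0:ℝ)..H, |deriv g z| ^ 3
      ≤ 2 * ∫ z in (0:ℝ)..H, |g z| * |deriv g z| * |deriv (deriv g) z| := by
  have hg : ContDiff ℝ (∞ : WithTop ℕ∞) g := hgo.of_le (by simp)
  have hg1 : ContDiff ℝ ∞ (deriv g) := (contDiff_infty_iff_deriv.1 hg).2
  have hg2 : ContDiff ℝ ∞ (deriv (deriv g)) := (contDiff_infty_iff_deriv.1 hg1).2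
  have hcg : Continuous g := hg.continuous
  have hcg1 : Continuous (deriv g) := hg1.continuous
  have hcg2 : Continuous (deriv (deriv g)) := hg2.continuous
  have hu : ∀ x ∈ Set.uIcc (0:ℝ) H, HasDerivAt g (deriv g x) x :=
    fun x _ => (hgo.differentiable (by simp) x).hasDerivAt
  have hv : ∀ x ∈ Set.uIcc (0:ℝ) H,
      HasDerivAt (fun s => |deriv g s| * deriv g s)
        (2 * |deriv g x| * deriv (deriv g) x) x := by
    intro x _
    exact (hasDerivAt_absMul (deriv g x)).comp x
      (hg1.differentiable (by simp) x).hasDerivAt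
  have hiu : IntervalIntegrable (deriv g) volume 0 H := hcg1.intervalIntegrable _ _
  have hiv : IntervalIntegrable (fun x => 2 * |deriv g x| * deriv (deriv g) x) volume 0 H :=
    (((continuous_const.mul hcg1.abs).mul hcg2)).intervalIntegrable _ _
  have hparts := intervalIntegral.integral_mul_deriv_eq_deriv_mul hu hv hiu hiv
  have hL : (∫ z in (0:ℝ)..H, g z * (2 * |deriv g z| * deriv (deriv g) z))
      = g H * (|deriv g H| * deriv g H) - g 0 * (|deriv g 0| * deriv g 0)
        - ∫ z in (0:ℝ)..H, deriv g z * (|deriv g z| * deriv g z) := hparts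
  have habs : ∀ z : ℝ, deriv g z * (|deriv g z| * deriv g z) = |deriv g z| ^ 3 := by
    intro z
    rcases le_or_gt 0 (deriv g z) with h | h
    · rw [abs_of_nonneg h]; ring
    · rw [abs_of_neg h]; ring
  have key : (∫ z in (0:ℝ)..H, |deriv g z| ^ 3)
      = - ∫ z in (0:ℝ)..H, g z * (2 * |deriv g z| * deriv (deriv g) z) := by
    rw [hL, h0, hHv]
    simp [intervalIntegral.integral_congr (g := fun z => |deriv g z| ^ 3)
      (fun z _ => habs z)]
  rw [key]
  have hle : - ∫ z in (0:ℝ)..H, g z * (2 * |deriv g z| * deriv (deriv g) z)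
      ≤ |∫ z in (0:ℝ)..H, g z * (2 * |deriv g z| * deriv (deriv g) z)| :=
    neg_le_abs _
  refine hle.trans ?_
  have := intervalIntegral.abs_integral_le_integral_abs
    (f := fun z => g z * (2 * |deriv g z| * deriv (deriv g) z)) (μ := volume) hH
  refine this.trans ?_
  rw [← intervalIntegral.integral_const_mul]
  apply intervalIntegral.integral_mono_on hH
  · exact ((hcg.mul ((continuous_const.mul hcg1.abs).mul hcg2)).abs.intervalIntegrable _ _)
  · exact (continuous_const.mul ((hcg.abs.mul hcg1.abs).mul hcg2.abs)).intervalIntegrable _ _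
  · intro x _
    rw [abs_mul, abs_mul, abs_mul, abs_abs, abs_two]
    ring_nf
    exact le_refl _

lemma pZ_eq_fderiv {f : ℝ → ℝ → ℝ → ℝ} (hf : Smooth3 f) (x y z : ℝ) :
    pZ f x y z = fderiv ℝ (fun p : ℝ × ℝ × ℝ => f p.1 p.2.1 p.2.2) (x, y, z) (0, 0, 1) := by
  have hc : HasDerivAt (fun s : ℝ => ((x, y, s) : ℝ × ℝ × ℝ)) ((0:ℝ), (0:ℝ), (1:ℝ)) z :=
    (hasDerivAt_const z x).prodMk ((hasDerivAt_const z y).prodMk (hasDerivAt_id z))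
  have hW := ((hf : ContDiff ℝ (⊤ : ℕ∞) _).differentiable (by simp) (x, y, z)).hasFDerivAt
  exact (hW.comp_hasDerivAt z hc).deriv

lemma smooth3_pZ {f : ℝ → ℝ → ℝ → ℝ} (hf : Smooth3 f) : Smooth3 (pZ f) := by
  have h1 : ContDiff ℝ (⊤ : ℕ∞)
      (fun p : ℝ × ℝ × ℝ => fderiv ℝ (fun p : ℝ × ℝ × ℝ => f p.1 p.2.1 p.2.2) p) :=
    (hf : ContDiff ℝ (⊤ : ℕ∞) _).fderiv_right (by simp)
  have h2 := h1.clm_apply (contDiff_const (c := ((0:ℝ),(0:ℝ),(1:ℝ))))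
  unfold Smooth3
  have : (fun p : ℝ × ℝ × ℝ => pZ f p.1 p.2.1 p.2.2)
      = fun p : ℝ × ℝ × ℝ =>
          fderiv ℝ (fun p : ℝ × ℝ × ℝ => f p.1 p.2.1 p.2.2) p ((0:ℝ),(0:ℝ),(1:ℝ)) := by
    funext p
    exact pZ_eq_fderiv hf p.1 p.2.1 p.2.2
  rw [this]
  exact h2

lemma slice_contDiff {f : ℝ → ℝ → ℝ → ℝ} (hf : Smooth3 f) (x y : ℝ) :
    ContDiff ℝ (⊤ : ℕ∞) (fun z => f x y z) := by
  have hc : ContDiff ℝ (⊤ : ℕ∞) (fun s : ℝ => ((x, y, s) : ℝ × ℝ × ℝ)) :=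
    contDiff_const.prodMk (contDiff_const.prodMk contDiff_id)
  exact (hf : ContDiff ℝ (⊤ : ℕ∞) _).comp hc

lemma icc_to_interval {a b : ℝ} (hab : a ≤ b) (f : ℝ → ℝ) :
    ∫ t in Set.Icc a b, f t = ∫ t in a..b, f t := by
  rw [intervalIntegral.integral_of_le hab, MeasureTheory.integral_Icc_eq_integral_Ioc]

lemma fubini_box {L H : ℝ} (hL : 0 ≤ L) (hH : 0 ≤ H) (G : ℝ × ℝ × ℝ → ℝ) (hG : Continuous G) :
    ∫ p in Omega L H, G p
      = ∫ x in Set.Icc (0:ℝ) L, ∫ y in (0:ℝ)..L, ∫ z in (0:ℝ)..H, G (x, y, z) := by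
  have hK : IsCompact (Set.Icc (0:ℝ) L ×ˢ (Set.Icc (0:ℝ) L ×ˢ Set.Icc (0:ℝ) H)) :=
    isCompact_Icc.prod (isCompact_Icc.prod isCompact_Icc)
  have hInt0 : IntegrableOn G (Set.Icc (0:ℝ) L ×ˢ (Set.Icc (0:ℝ) L ×ˢ Set.Icc (0:ℝ) H)) :=
    hG.continuousOn.integrableOn_compact hK
  have hInt : IntegrableOn G (Set.Icc (0:ℝ) L ×ˢ (Set.Icc (0:ℝ) L ×ˢ Set.Icc (0:ℝ) H))
      ((volume : Measure ℝ).prod ((volume : Measure (ℝ × ℝ)))) := by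
    rwa [← Measure.volume_eq_prod]
  rw [show (∫ p in Omega L H, G p)
      = ∫ p in Set.Icc (0:ℝ) L ×ˢ (Set.Icc (0:ℝ) L ×ˢ Set.Icc (0:ℝ) H), G p
          ∂((volume : Measure ℝ).prod (volume : Measure (ℝ × ℝ))) by
    rw [← Measure.volume_eq_prod]; rfl]
  rw [MeasureTheory.setIntegral_prod _ hInt]
  refine setIntegral_congr_fun measurableSet_Icc (fun x _ => ?_)
  have hGx : Continuous fun q : ℝ × ℝ => G (x, q) := hG.comp (by fun_prop)
  have hIntx : IntegrableOn (fun q : ℝ × ℝ => G (x, q))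
      (Set.Icc (0:ℝ) L ×ˢ Set.Icc (0:ℝ) H) ((volume : Measure ℝ).prod volume) := by
    rw [← Measure.volume_eq_prod]
    exact hGx.continuousOn.integrableOn_compact (isCompact_Icc.prod isCompact_Icc)
  rw [show (∫ q in Set.Icc (0:ℝ) L ×ˢ Set.Icc (0:ℝ) H, G (x, q))
      = ∫ q in Set.Icc (0:ℝ) L ×ˢ Set.Icc (0:ℝ) H, G (x, q)
          ∂((volume : Measure ℝ).prod (volume : Measure ℝ)) by
    rw [← Measure.volume_eq_prod]]
  rw [MeasureTheory.setIntegral_prod _ hIntx]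
  rw [← icc_to_interval hL]
  refine setIntegral_congr_fun measurableSet_Icc (fun y _ => ?_)
  rw [← icc_to_interval hH]

lemma memLp_of_continuous {f : ℝ × ℝ × ℝ → ℝ} (hf : Continuous f) (p : ENNReal)
    {K : Set (ℝ × ℝ × ℝ)} (hKc : IsCompact K) (hKm : MeasurableSet K) :
    MemLp f p (volume.restrict K) := by
  haveI : IsFiniteMeasure (volume.restrict K) :=
    ⟨by rw [Measure.restrict_apply_univ]; exact hKc.measure_lt_top⟩
  obtain ⟨C, hC⟩ := hKc.exists_bound_of_continuousOn hf.continuousOn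
  exact MemLp.of_bound hf.aestronglyMeasurable.restrict C
    ((ae_restrict_iff' hKm).2 (Filter.Eventually.of_forall hC))

lemma holder3 {K : Set (ℝ × ℝ × ℝ)} (hKc : IsCompact K) (hKm : MeasurableSet K)
    (f g h : ℝ × ℝ × ℝ → ℝ) (hf : Continuous f) (hg : Continuous g) (hh : Continuous h) :
    ∫ p in K, |f p| * |g p| * |h p|
      ≤ (∫ p in K, |f p| ^ 3) ^ ((1:ℝ)/3) * (∫ p in K, (g p) ^ 2) ^ ((1:ℝ)/2)
        * (∫ p in K, (h p) ^ 6) ^ ((1:ℝ)/6) := by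
  haveI : IsFiniteMeasure (volume.restrict K) :=
    ⟨by rw [Measure.restrict_apply_univ]; exact hKc.measure_lt_top⟩
  have hpq : Real.HolderConjugate 3 (3/2) := ⟨by norm_num, by norm_num, by norm_num⟩
  have h1 := integral_mul_le_Lp_mul_Lq_of_nonneg (μ := volume.restrict K) hpq
    (f := fun p => |f p|) (g := fun p => |g p| * |h p|)
    (Filter.Eventually.of_forall fun p => abs_nonneg _)
    (Filter.Eventually.of_forall fun p => mul_nonneg (abs_nonneg _) (abs_nonneg _))
    (memLp_of_continuous hf.abs _ hKc hKm)
    (memLp_of_continuous (hg.abs.mul hh.abs) _ hKc hKm)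
  have hpq2 : Real.HolderConjugate 4 (4/3) := ⟨by norm_num, by norm_num, by norm_num⟩
  have h2 := integral_mul_le_Lp_mul_Lq_of_nonneg (μ := volume.restrict K) hpq2
    (f := fun p => |h p| ^ ((3:ℝ)/2)) (g := fun p => |g p| ^ ((3:ℝ)/2))
    (Filter.Eventually.of_forall fun p => Real.rpow_nonneg (abs_nonneg _) _)
    (Filter.Eventually.of_forall fun p => Real.rpow_nonneg (abs_nonneg _) _)
    (memLp_of_continuous (hh.abs.rpow_const fun x => Or.inr (by norm_num)) _ hKc hKm)
    (memLp_of_continuous (hg.abs.rpow_const fun x => Or.inr (by norm_num)) _ hKc hKm)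
  have e1 : ∀ p, (|h p| ^ ((3:ℝ)/2)) ^ (4:ℝ) = (h p) ^ 6 := by
    intro p
    rw [← Real.rpow_mul (abs_nonneg _)]
    norm_num
    have h6 : |h p| ^ ((6:ℕ):ℝ) = h p ^ 6 := by
      rw [Real.rpow_natCast, ← abs_pow]; exact abs_of_nonneg (by positivity)
    exact_mod_cast h6
  have e2 : ∀ p, (|g p| ^ ((3:ℝ)/2)) ^ ((4:ℝ)/3) = (g p) ^ 2 := by
    intro p
    rw [← Real.rpow_mul (abs_nonneg _)]
    norm_num
  have e3 : ∀ p, |h p| ^ ((3:ℝ)/2) * |g p| ^ ((3:ℝ)/2) = (|g p| * |h p|) ^ ((3:ℝ)/2) := by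
    intro p
    rw [Real.mul_rpow (abs_nonneg _) (abs_nonneg _)]; ring
  rw [integral_congr_ae (Filter.Eventually.of_forall fun p => e1 p),
      integral_congr_ae (Filter.Eventually.of_forall fun p => e2 p)] at h2
  rw [integral_congr_ae (Filter.Eventually.of_forall fun p => e3 p)] at h2
  beta_reduce at h1 h2
  rw [show (1/((3:ℝ)/2)) = (2:ℝ)/3 by norm_num] at h1
  rw [show (1/((4:ℝ)/3)) = (3:ℝ)/4 by norm_num] at h2
  have hconv2 : (∫ a in K, |f a| ^ (3:ℝ)) = ∫ p in K, |f p| ^ 3 :=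
    integral_congr_ae (Filter.Eventually.of_forall fun a => by
      exact_mod_cast Real.rpow_natCast (|f a|) 3)
  rw [hconv2] at h1
  have hAnn : (0:ℝ) ≤ ∫ p in K, |f p| ^ 3 :=
    setIntegral_nonneg hKm fun p _ => by positivity
  have hBnn : (0:ℝ) ≤ ∫ p in K, (g p) ^ 2 :=
    setIntegral_nonneg hKm fun p _ => by positivity
  have hCnn : (0:ℝ) ≤ ∫ p in K, (h p) ^ 6 :=
    setIntegral_nonneg hKm fun p _ => by positivity
  have hXnn : (0:ℝ) ≤ ∫ a in K, (|g a| * |h a|) ^ ((3:ℝ)/2) :=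
    setIntegral_nonneg hKm fun p _ => Real.rpow_nonneg (by positivity) _
  have hX23 : (∫ a in K, (|g a| * |h a|) ^ ((3:ℝ)/2)) ^ ((2:ℝ)/3)
      ≤ ((∫ p in K, (h p) ^ 6) ^ ((1:ℝ)/4) * (∫ p in K, (g p) ^ 2) ^ ((3:ℝ)/4)) ^ ((2:ℝ)/3) :=
    Real.rpow_le_rpow hXnn h2 (by norm_num)
  have hsplit : ((∫ p in K, (h p) ^ 6) ^ ((1:ℝ)/4) * (∫ p in K, (g p) ^ 2) ^ ((3:ℝ)/4)) ^ ((2:ℝ)/3)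
      = (∫ p in K, (h p) ^ 6) ^ ((1:ℝ)/6) * (∫ p in K, (g p) ^ 2) ^ ((1:ℝ)/2) := by
    rw [Real.mul_rpow (Real.rpow_nonneg hCnn _) (Real.rpow_nonneg hBnn _),
      ← Real.rpow_mul hCnn, ← Real.rpow_mul hBnn]
    norm_num
  have hgoalL : (∫ p in K, |f p| * |g p| * |h p|) = ∫ a in K, |f a| * (|g a| * |h a|) :=
    integral_congr_ae (Filter.Eventually.of_forall fun p => by ring)
  rw [hgoalL]
  refine h1.trans ?_
  have := mul_le_mul_of_nonneg_left (hX23.trans_eq hsplit) (Real.rpow_nonneg hAnn ((1:ℝ)/3))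
  refine this.trans_eq ?_
  ring

end Helpers

/-- (AppA2) of Lemma 4 (L3lem): ‖w_z‖₃ ≤ √2 ‖w_zz‖₂^{1/2} ‖w‖₆^{1/2}. -/
theorem L3lem_vertical (L H : ℝ) (hL : 0 < L) (hH : 0 < H)
    (w : ℝ → ℝ → ℝ → ℝ) (hw : Smooth3 w) (hwp : PerXY L w)
    (hbc : ∀ x y : ℝ, w x y 0 = 0 ∧ w x y H = 0) :
    (∫ p in Omega L H, |pZ w p.1 p.2.1 p.2.2|^3) ^ ((1:ℝ)/3)
      ≤ Real.sqrt 2 *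
        (∫ p in Omega L H, (pZ (pZ w) p.1 p.2.1 p.2.2)^2) ^ ((1:ℝ)/4) *
        (∫ p in Omega L H, (w p.1 p.2.1 p.2.2)^6) ^ ((1:ℝ)/12) := by
  have hKc : IsCompact (Omega L H) :=
    isCompact_Icc.prod (isCompact_Icc.prod isCompact_Icc)
  have hKm : MeasurableSet (Omega L H) :=
    measurableSet_Icc.prod (measurableSet_Icc.prod measurableSet_Icc)
  have hw1 : Smooth3 (pZ w) := smooth3_pZ hw
  have hw2 : Smooth3 (pZ (pZ w)) := smooth3_pZ hw1
  have hcw : Continuous fun p : ℝ × ℝ × ℝ => w p.1 p.2.1 p.2.2 :=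
    (hw : ContDiff ℝ (⊤ : ℕ∞) _).continuous
  have hc1 : Continuous fun p : ℝ × ℝ × ℝ => pZ w p.1 p.2.1 p.2.2 :=
    (hw1 : ContDiff ℝ (⊤ : ℕ∞) _).continuous
  have hc2 : Continuous fun p : ℝ × ℝ × ℝ => pZ (pZ w) p.1 p.2.1 p.2.2 :=
    (hw2 : ContDiff ℝ (⊤ : ℕ∞) _).continuous
  set A := ∫ p in Omega L H, |pZ w p.1 p.2.1 p.2.2|^3 with hA
  set B := ∫ p in Omega L H, (pZ (pZ w) p.1 p.2.1 p.2.2)^2 with hB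
  set C := ∫ p in Omega L H, (w p.1 p.2.1 p.2.2)^6 with hC
  have hAnn : (0:ℝ) ≤ A := setIntegral_nonneg hKm fun p _ => by positivity
  have hBnn : (0:ℝ) ≤ B := setIntegral_nonneg hKm fun p _ => by positivity
  have hCnn : (0:ℝ) ≤ C := setIntegral_nonneg hKm fun p _ => by positivity
  -- Step 1: A ≤ 2 D
  set D := ∫ p in Omega L H,
      |pZ w p.1 p.2.1 p.2.2| * |pZ (pZ w) p.1 p.2.1 p.2.2| * |w p.1 p.2.1 p.2.2| with hD
  have step1 : A ≤ 2 * D := by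
    have hG1 : Continuous fun p : ℝ × ℝ × ℝ => |pZ w p.1 p.2.1 p.2.2| ^ 3 := (hc1.abs).pow 3
    have hG2 : Continuous fun p : ℝ × ℝ × ℝ =>
        |w p.1 p.2.1 p.2.2| * |pZ w p.1 p.2.1 p.2.2| * |pZ (pZ w) p.1 p.2.1 p.2.2| :=
      (hcw.abs.mul hc1.abs).mul hc2.abs
    have hDalt : D = ∫ p in Omega L H,
        |w p.1 p.2.1 p.2.2| * |pZ w p.1 p.2.1 p.2.2| * |pZ (pZ w) p.1 p.2.1 p.2.2| :=
      integral_congr_ae (Filter.Eventually.of_forall fun p => by ring)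
    rw [hA, hDalt, fubini_box hL.le hH.le _ hG1, fubini_box hL.le hH.le _ hG2,
      ← MeasureTheory.integral_const_mul]
    dsimp only
    -- parametric continuity
    have hin1 : Continuous fun q : ℝ × ℝ => ∫ z in (0:ℝ)..H, |pZ w q.1 q.2 z| ^ 3 := by
      apply intervalIntegral.continuous_parametric_intervalIntegral_of_continuous'
      exact ((hc1.comp (by fun_prop : Continuous fun r : (ℝ × ℝ) × ℝ =>
        ((r.1.1, r.1.2, r.2) : ℝ × ℝ × ℝ))).abs).pow 3
    have hin2 : Continuous fun q : ℝ × ℝ => ∫ z in (0:ℝ)..H,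
        |w q.1 q.2 z| * |pZ w q.1 q.2 z| * |pZ (pZ w) q.1 q.2 z| := by
      apply intervalIntegral.continuous_parametric_intervalIntegral_of_continuous'
      have hre : Continuous fun r : (ℝ × ℝ) × ℝ => ((r.1.1, r.1.2, r.2) : ℝ × ℝ × ℝ) := by
        fun_prop
      exact ((hcw.comp hre).abs.mul (hc1.comp hre).abs).mul (hc2.comp hre).abs
    have hout1 : Continuous fun x : ℝ =>
        ∫ y in (0:ℝ)..L, ∫ z in (0:ℝ)..H, |pZ w x y z| ^ 3 := by
      apply intervalIntegral.continuous_parametric_intervalIntegral_of_continuous'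
      exact hin1
    have hout2 : Continuous fun x : ℝ => ∫ y in (0:ℝ)..L, ∫ z in (0:ℝ)..H,
        |w x y z| * |pZ w x y z| * |pZ (pZ w) x y z| := by
      apply intervalIntegral.continuous_parametric_intervalIntegral_of_continuous'
      exact hin2
    apply setIntegral_mono_on hout1.integrableOn_Icc
      (continuous_const.mul hout2).integrableOn_Icc measurableSet_Icc
    intro x _
    simp only [Pi.mul_apply]; rw [← intervalIntegral.integral_const_mul]
    apply intervalIntegral.integral_mono_on hL.le
    · apply Continuous.intervalIntegrable
      apply intervalIntegral.continuous_parametric_intervalIntegral_of_continuous'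
      exact ((hc1.comp (by fun_prop : Continuous fun r : ℝ × ℝ =>
        ((x, r.1, r.2) : ℝ × ℝ × ℝ))).abs).pow 3
    · apply Continuous.intervalIntegrable
      apply Continuous.mul continuous_const
      apply intervalIntegral.continuous_parametric_intervalIntegral_of_continuous'
      have hre : Continuous fun r : ℝ × ℝ => ((x, r.1, r.2) : ℝ × ℝ × ℝ) := by fun_prop
      exact ((hcw.comp hre).abs.mul (hc1.comp hre).abs).mul (hc2.comp hre).abs
    · intro y _
      exact oneD H hH.le (fun z => w x y z) (slice_contDiff hw x y) (hbc x y).1 (hbc x y).2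
  -- Step 2: D ≤ A^(1/3) B^(1/2) C^(1/6)
  have step2 : D ≤ A ^ ((1:ℝ)/3) * B ^ ((1:ℝ)/2) * C ^ ((1:ℝ)/6) :=
    holder3 hKc hKm _ _ _ hc1 hc2 hcw
  -- Step 3: algebra
  have key : A ≤ 2 * (A ^ ((1:ℝ)/3) * B ^ ((1:ℝ)/2) * C ^ ((1:ℝ)/6)) :=
    step1.trans (by linarith)
  rcases eq_or_lt_of_le hAnn with h0 | hpos
  · rw [← h0, Real.zero_rpow (by norm_num)]
    positivity
  · have hA13pos : (0:ℝ) < A ^ ((1:ℝ)/3) := Real.rpow_pos_of_pos hpos _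
    have hsplitA : A ^ ((2:ℝ)/3) * A ^ ((1:ℝ)/3) = A := by
      rw [← Real.rpow_add hpos]; norm_num
    have h23 : A ^ ((2:ℝ)/3) ≤ 2 * (B ^ ((1:ℝ)/2) * C ^ ((1:ℝ)/6)) := by
      have hk : A ^ ((2:ℝ)/3) * A ^ ((1:ℝ)/3)
          ≤ (2 * (B ^ ((1:ℝ)/2) * C ^ ((1:ℝ)/6))) * A ^ ((1:ℝ)/3) := by
        rw [hsplitA]; calc A ≤ 2 * (A ^ ((1:ℝ)/3) * B ^ ((1:ℝ)/2) * C ^ ((1:ℝ)/6)) := key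
          _ = (2 * (B ^ ((1:ℝ)/2) * C ^ ((1:ℝ)/6))) * A ^ ((1:ℝ)/3) := by ring
      exact le_of_mul_le_mul_right hk hA13pos
    have hfin : A ^ ((1:ℝ)/3) ≤ (2 * (B ^ ((1:ℝ)/2) * C ^ ((1:ℝ)/6))) ^ ((1:ℝ)/2) := by
      have : A ^ ((1:ℝ)/3) = (A ^ ((2:ℝ)/3)) ^ ((1:ℝ)/2) := by
        rw [← Real.rpow_mul hAnn]; norm_num
      rw [this]
      exact Real.rpow_le_rpow (Real.rpow_nonneg hAnn _) h23 (by norm_num)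
    refine hfin.trans_eq ?_
    rw [Real.mul_rpow (by norm_num) (mul_nonneg (Real.rpow_nonneg hBnn _) (Real.rpow_nonneg hCnn _)),
      Real.mul_rpow (Real.rpow_nonneg hBnn _) (Real.rpow_nonneg hCnn _),
      ← Real.rpow_mul hBnn, ← Real.rpow_mul hCnn, ← Real.sqrt_eq_rpow]
    norm_num
    ring
end
end

section
/- Let H > 0 and let f : [0,H] → ℝ be twice continuously differentiable with f'(0) = f'(H) = 0. Then ∫₀^H |f'(z)|³ dz ≤ 2 ∫₀^H |f(z)| |f''(z)| |f'(z)| dz. -/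
/-!
Integrate by parts once with `u = f` and `v = f' |f'|`: the boundary term vanishes by the
Neumann conditions, and `v` is differentiable with `v' = 2 |f'| f''` although `|f'|` need not be,
since `y ↦ y |y|` is `C¹` with derivative `2 |y|`. Hence `∫ |f'|³ = -2 ∫ f |f'| f''`, and the
inequality follows by bounding the integrand by its absolute value.
-/

open intervalIntegral Topology Asymptotics

lemma hasDerivAt_mul_abs (x : ℝ) : HasDerivAt (fun y : ℝ => y * |y|) (2 * |x|) x := by
  rcases lt_trichotomy x 0 with hx | rfl | hx
  · have hloc : (fun y : ℝ => y * |y|) =ᶠ[𝓝 x] fun y => -y ^ 2 := by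
      filter_upwards [Iio_mem_nhds hx] with y hy
      rw [abs_of_neg hy]; ring
    refine (((hasDerivAt_pow 2 x).neg).congr_deriv ?_).congr_of_eventuallyEq hloc
    rw [abs_of_neg hx]
    ring
  · rw [hasDerivAt_iff_isLittleO_nhds_zero]
    simp only [zero_add, abs_zero, mul_zero, sub_zero, smul_zero]
    refine (isBigO_refl (fun h : ℝ => h) _).mul_isLittleO ((isLittleO_one_iff ℝ).2 ?_)
      |>.congr_right (fun h => mul_one h)
    simpa using (continuous_abs.tendsto (0 : ℝ))
  · have hloc : (fun y : ℝ => y * |y|) =ᶠ[𝓝 x] fun y => y ^ 2 := by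
      filter_upwards [Ioi_mem_nhds hx] with y hy
      rw [abs_of_pos hy]; ring
    refine ((hasDerivAt_pow 2 x).congr_deriv ?_).congr_of_eventuallyEq hloc
    rw [abs_of_pos hx]
    ring

lemma integral_abs_deriv_pow_three_eq_of_deriv_eq_zero {f : ℝ → ℝ} {a b : ℝ}
    (hf : ContDiff ℝ 2 f) (ha : deriv f a = 0) (hb : deriv f b = 0) :
    ∫ z in a..b, |deriv f z| ^ 3
      = -∫ z in a..b, f z * (2 * |deriv f z| * deriv (deriv f) z) := by
  have hf' : ContDiff ℝ 1 (deriv f) := hf.deriv' (n := 1)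
  have hc' : Continuous (deriv f) := hf'.continuous
  have hc'' : Continuous (deriv (deriv f)) := hf'.continuous_deriv_one
  have ibp := integral_mul_deriv_eq_deriv_mul (a := a) (b := b)
    (fun z _ => (hf.differentiable two_ne_zero z).hasDerivAt)
    (fun z _ => (hasDerivAt_mul_abs _).comp z (hf'.differentiable one_ne_zero z).hasDerivAt)
    (hc'.intervalIntegrable a b)
    ((by fun_prop : Continuous fun z => 2 * |deriv f z| * deriv (deriv f) z).intervalIntegrable
      a b)
  rw [ibp]
  simp only [Function.comp_apply, ha, hb, abs_zero, mul_zero, sub_zero, zero_sub, neg_neg]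
  refine integral_congr fun z _ => ?_
  rw [pow_succ, sq_abs]
  ring

/-- (AppAp2): 1-D integration-by-parts inequality with Neumann boundary conditions:
∫₀^H |f'|³ ≤ 2 ∫₀^H |f| |f''| |f'|. -/
theorem one_dim_ibp_inequality (H : ℝ) (hH : 0 < H) (f : ℝ → ℝ)
    (hf : ContDiff ℝ 2 f) (h0 : deriv f 0 = 0) (hHbc : deriv f H = 0) :
    ∫ z in (0:ℝ)..H, |deriv f z|^3
      ≤ 2 * ∫ z in (0:ℝ)..H, |f z| * |deriv (deriv f) z| * |deriv f z| := by
  have hc : Continuous f := hf.continuous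
  have hc' : Continuous (deriv f) := hf.continuous_deriv one_le_two
  have hc'' : Continuous (deriv (deriv f)) := (hf.deriv' (n := 1)).continuous_deriv_one
  rw [integral_abs_deriv_pow_three_eq_of_deriv_eq_zero hf h0 hHbc, ← integral_neg,
    ← integral_const_mul]
  refine integral_mono_on hH.le ?_ ?_ fun z _ => (neg_le_abs _).trans_eq ?_
  · exact Continuous.intervalIntegrable (by fun_prop) _ _
  · exact Continuous.intervalIntegrable (by fun_prop) _ _
  · simp only [abs_mul, abs_abs, abs_two]
    ring
end
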